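/- arXiv:2510.20938 — 4 statements merged into one kernel-verified Lean document; each statement's English description precedes it below -/
import Mathlib

section
/- Let f : M → M be a local homeomorphism of a compact metric space M such that every preorbit ⋃_{j≥0} f^{-j}(x) is dense in M, let φ : M → ℝ be continuous, and let ν be a reference measure for (f, φ), i.e. a Borel probability measure with L*_{f,φ}ν = λν for some λ > 0. Then the support of ν is all of M. -/
open MeasureTheory Set Filter Topology
open scoped ENNReal NNReal

noncomputable section

namespace PaperWG

variable {X : Type*}

section Dyn

variable [MetricSpace X]

/-- The dynamical ball `B_ε(x,n) = {y : d(T^j x, T^j y) < ε for all 0 ≤ j ≤ n}`. -/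
def dynBall (T : X → X) (x : X) (n : ℕ) (ε : ℝ) : Set X :=
  {y | ∀ j ≤ n, dist (T^[j] x) (T^[j] y) < ε}

/-- Birkhoff sum `S_n φ(x) = ∑_{j=0}^{n-1} φ(T^j x)`. -/
def birkhoff (T : X → X) (φ : X → ℝ) (n : ℕ) (x : X) : ℝ :=
  ∑ j ∈ Finset.range n, φ (T^[j] x)

/-- `R_{n,ε}φ(x) = sup_{y ∈ B_ε(x,n)} S_n φ(y)`. -/
def rSup (T : X → X) (φ : X → ℝ) (n : ℕ) (ε : ℝ) (x : X) : ℝ :=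
  sSup (birkhoff T φ n '' dynBall T x n ε)

/-- `m_T(φ,Λ,ε,N,γ)`: infimum over countable covers of `Λ` by dynamical balls with
time at least `N` of `∑ exp(-γ n + R_{n,ε}φ(x))`. -/
def mPre (T : X → X) (φ : X → ℝ) (Λ : Set X) (ε : ℝ) (N : ℕ) (γ : ℝ) : ℝ≥0∞ :=
  ⨅ (U : Set (X × ℕ)) (_ : U.Countable) (_ : ∀ p ∈ U, N ≤ p.2)
    (_ : Λ ⊆ ⋃ p ∈ U, dynBall T p.1 p.2 ε),
    ∑' p : U, ENNReal.ofReal (Real.exp (-γ * (p.1.2 : ℝ) + rSup T φ p.1.2 ε p.1.1))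

/-- `m_T(φ,Λ,ε,γ) = lim_{N→∞} m_T(φ,Λ,ε,N,γ)`; the quantity is nondecreasing in `N`,
so the limit is the supremum. -/
def mRel (T : X → X) (φ : X → ℝ) (Λ : Set X) (ε γ : ℝ) : ℝ≥0∞ :=
  ⨆ N : ℕ, mPre T φ Λ ε N γ

/-- `P_T(φ,Λ,ε) = inf {γ : m_T(φ,Λ,ε,γ) = 0}`. -/
def presRelEps (T : X → X) (φ : X → ℝ) (Λ : Set X) (ε : ℝ) : ℝ :=
  sInf {γ : ℝ | mRel T φ Λ ε γ = 0}

/-- The relative topological pressure `P_T(φ,Λ) = lim_{ε→0} P_T(φ,Λ,ε)`; the quantity is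
nonincreasing in `ε`, so the limit is the supremum over `ε > 0`. -/
def presRel (T : X → X) (φ : X → ℝ) (Λ : Set X) : ℝ :=
  ⨆ ε : {e : ℝ // 0 < e}, presRelEps T φ Λ ε.1

/-- The topological pressure `P_T(φ) = P_T(φ, X)`. -/
def pres (T : X → X) (φ : X → ℝ) : ℝ :=
  presRel T φ Set.univ

/-- `g` maps `A` homeomorphically onto `B`. -/
def MapsHomeomorphicallyOnto (g : X → X) (A B : Set X) : Prop :=
  g '' A = B ∧ ∃ e : A ≃ₜ B, ∀ a : A, (e a : X) = g a

/-- Condition (*): `n ≥ 1` is a Gibbs time for `x` when `f^n` maps the dynamical ball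
`B_ε(x,n)` homeomorphically onto the ball `B(f^n x, ε)` for every `0 < ε < δ₀`. -/
def IsGibbsTime (f : X → X) (δ₀ : ℝ) (x : X) (n : ℕ) : Prop :=
  1 ≤ n ∧ ∀ ε : ℝ, 0 < ε → ε < δ₀ →
    MapsHomeomorphicallyOnto (f^[n]) (dynBall f x n ε) (Metric.ball (f^[n] x) ε)

/-- The set `G` of Hypothesis (H1): points whose frequency of Gibbs times is at least `θ`. -/
def gibbsSet (f : X → X) (δ₀ θ : ℝ) : Set X :=
  {x | θ ≤ Filter.atTop.limsup
    (fun n : ℕ => ((Set.Icc 1 n ∩ {j | IsGibbsTime f δ₀ x j}).ncard : ℝ) / n)}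

/-- Every preorbit `⋃_{j≥0} f^{-j}(x)` is dense. -/
def DensePreorbits (f : X → X) : Prop :=
  ∀ x : X, Dense (⋃ n : ℕ, f^[n] ⁻¹' {x})

/-- Hypothesis (H2): Bowen property of `φ` on `G` at Gibbs times. -/
def BowenOnGibbs (f : X → X) (φ : X → ℝ) (δ₀ : ℝ) (G : Set X) : Prop :=
  ∃ V > 0, ∃ ε > 0, ∀ x ∈ G, ∀ n : ℕ, IsGibbsTime f δ₀ x n →
    ∀ y ∈ dynBall f x n ε, ∀ z ∈ dynBall f x n ε,
      |∑ i ∈ Finset.range (n + 1), (φ (f^[i] y) - φ (f^[i] z))| ≤ V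

/-- Bowen property of `φ` on a set `S` at all times (Hypothesis (H4)). -/
def BowenOn (T : X → X) (φ : X → ℝ) (S : Set X) : Prop :=
  ∃ ε > 0, ∃ V > 0, ∀ x ∈ S, ∀ n : ℕ,
    ∀ y ∈ dynBall T x n ε, ∀ z ∈ dynBall T x n ε,
      |∑ j ∈ Finset.range (n + 1), (φ (T^[j] y) - φ (T^[j] z))| ≤ V

/-- Hypotheses (H3)/(H5): the topological pressure is located on `S`:
`P_T(φ, Sᶜ) < P_T(φ, S) = P_T(φ)`. -/
def PressureLocatedOn (T : X → X) (φ : X → ℝ) (S : Set X) : Prop :=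
  presRel T φ Sᶜ < presRel T φ S ∧ presRel T φ S = pres T φ

end Dyn

section Meas

variable [MetricSpace X] [MeasurableSpace X]

/-- `μ` is a weak Gibbs measure for `(T,φ)` with constant `P`. -/
def IsWeakGibbs (T : X → X) (φ : X → ℝ) (μ : Measure X) (P : ℝ) : Prop :=
  ∃ δ > 0, ∀ ε : ℝ, 0 < ε → ε ≤ δ → ∃ K > 0,
    ∀ᵐ x ∂μ, ∃ nk : ℕ → ℕ, StrictMono nk ∧
      ∀ k : ℕ, ∀ y ∈ dynBall T x (nk k) ε,
        ENNReal.ofReal (K⁻¹ * Real.exp (birkhoff T φ (nk k) y - (nk k : ℝ) * P))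
            ≤ μ (dynBall T x (nk k) ε) ∧
          μ (dynBall T x (nk k) ε)
            ≤ ENNReal.ofReal (K * Real.exp (birkhoff T φ (nk k) y - (nk k : ℝ) * P))

/-- The Ruelle–Perron–Frobenius transfer operator
`L_{f,φ} ψ (x) = ∑_{y ∈ f⁻¹(x)} e^{φ(y)} ψ(y)`. -/
def transferOp (f : X → X) (φ ψ : X → ℝ) (x : X) : ℝ :=
  ∑' y : (f ⁻¹' {x} : Set X), Real.exp (φ y) * ψ y

/-- A reference measure for `(f,φ)`: a Borel probability measure `ν` with
`L*_{f,φ} ν = λ ν`. -/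
def IsReferenceMeasure (f : X → X) (φ : X → ℝ) (ν : Measure X) (lam : ℝ) : Prop :=
  IsProbabilityMeasure ν ∧ 0 < lam ∧
    ∀ ψ : X → ℝ, Continuous ψ →
      ∫ x, transferOp f φ ψ x ∂ν = lam * ∫ x, ψ x ∂ν

end Meas

section Entropy

variable [MeasurableSpace X]

/-- Entropy of the finite partition of `X` by the fibers of `P`. -/
def partEntropy (μ : Measure X) {α : Type} [Fintype α] (P : X → α) : ℝ :=
  ∑ a : α, Real.negMulLog ((μ (P ⁻¹' {a})).toReal)

/-- Kolmogorov–Sinai entropy of `μ` with respect to the partition given by `P`. -/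
def entropyWrt (T : X → X) (μ : Measure X) {k : ℕ} (P : X → Fin k) : ℝ :=
  Filter.atTop.liminf fun n : ℕ =>
    partEntropy μ (fun x => fun j : Fin n => P (T^[(j : ℕ)] x)) / n

/-- Kolmogorov–Sinai (metric) entropy of `μ`: supremum over finite measurable
partitions of the entropy of `T` with respect to the partition. -/
def metricEntropy (T : X → X) (μ : Measure X) : ℝ :=
  ⨆ p : Σ k : ℕ, {P : X → Fin k // Measurable P}, entropyWrt T μ p.2.1

end Entropy

section Equi

variable [MetricSpace X] [MeasurableSpace X]

/-- `μ` is an equilibrium state for `(T,φ)`: it is `T`-invariant and attains the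
supremum of `η ↦ h_η(T) + ∫ φ dη` over all `T`-invariant Borel probability measures. -/
def IsEquilibriumState (T : X → X) (φ : X → ℝ) (μ : Measure X) : Prop :=
  IsProbabilityMeasure μ ∧ Measure.map T μ = μ ∧
    ∀ η : Measure X, IsProbabilityMeasure η → Measure.map T η = η →
      metricEntropy T η + ∫ x, φ x ∂η ≤ metricEntropy T μ + ∫ x, φ x ∂μ

/-- A generating partition for `G`: a countable measurable partition of `G` with finite
entropy whose iterates under `f` generate the Borel σ-algebra of `G` (in the sense that
every measurable set agrees on `G` with a set in the σ-algebra generated by the cylinders). -/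
structure GeneratingPartition (f : X → X) (G : Set X) : Type _ where
  part : ℕ → Set X
  measurable : ∀ i, MeasurableSet (part i)
  disj : Pairwise (Function.onFun Disjoint part)
  cover : G = ⋃ i, part i
  finiteEntropy : ∀ μ : Measure X, IsProbabilityMeasure μ →
    Summable fun i => Real.negMulLog ((μ (part i)).toReal)
  generates : ∀ B : Set X, MeasurableSet B →
    ∃ B' : Set X,
      MeasurableSet[MeasurableSpace.generateFrom
        {s : Set X | ∃ (n : ℕ) (a : Fin n → ℕ), s = ⋂ j : Fin n, f^[(j : ℕ)] ⁻¹' part (a j)}] B' ∧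
      B ∩ G = B' ∩ G

end Equi

end PaperWG

/-!
If `ν` vanished on a neighbourhood of `y`, a bump `ψ ≥ 0` with `ψ y > 0` would have
`∫ ψ dν = 0`, hence `∫ Lⁿψ dν = λⁿ ∫ ψ dν = 0` for the continuous, nonnegative functions `Lⁿψ`.
But `Lⁿψ (fⁿ y) ≥ e^{Sₙφ(y)} ψ y > 0`, so `fⁿ y` lies outside the support of `ν`. Thus the
support of `ν`, which is closed and nonempty, contains the preorbit of each of its points;
preorbits being dense, it is all of `M`. Continuity of `Lψ` comes from `f` being a covering map
with finite fibres, as a local homeomorphism of a compact space.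
-/

section FiberSum

variable {E X R : Type*} [TopologicalSpace E] [TopologicalSpace X]
  [AddCommMonoid R] [TopologicalSpace R] [ContinuousAdd R] {f : E → X} {g : E → R}

theorem IsLocalHomeomorph.finite_preimage_singleton [CompactSpace E] [T1Space X]
    (hf : IsLocalHomeomorph f) (x : X) : (f ⁻¹' {x}).Finite :=
  (isClosed_singleton.preimage hf.continuous).isCompact.finite
    (.of_openPartialHomeomorph f subset_rfl fun e _ =>
      let ⟨φ, he, hφ⟩ := hf e
      ⟨φ, he, hφ.symm⟩)

theorem Bundle.Trivialization.continuousOn_tsum_fiber {F : Type*} [TopologicalSpace F]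
    [Finite F] (t : Bundle.Trivialization F f) (hg : Continuous g) :
    ContinuousOn (fun x => ∑' y : f ⁻¹' {x}, g y) t.baseSet := by
  have := Fintype.ofFinite F
  have hcont : ContinuousOn (fun x => ∑ i : F, g (t.toPartialEquiv.symm (x, i))) t.baseSet :=
    continuousOn_finsetSum (f := fun i x => g (t.toPartialEquiv.symm (x, i))) _ fun _ _ =>
      hg.comp_continuousOn t.continuousOn_symm_prodMk_left
  refine hcont.congr fun x hx => ?_
  rw [← (t.preimageSingletonHomeomorph hx).symm.toEquiv.tsum_eq, tsum_fintype]
  rfl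

theorem IsCoveringMap.continuous_tsum_fiber (hf : IsCoveringMap f)
    (hfin : ∀ x, (f ⁻¹' {x}).Finite) (hg : Continuous g) :
    Continuous fun x => ∑' y : f ⁻¹' {x}, g y := by
  refine continuous_iff_continuousAt.2 fun x => ?_
  have := (hfin x).to_subtype
  -- `toTrivialization` needs a nonempty fibre; an empty fibre stays empty over a neighbourhood.
  rcases isEmpty_or_nonempty (f ⁻¹' {x}) with hx | hx
  · obtain ⟨-, U, hxU, hU, -, H, -⟩ := hf x
    have hempty (x' : X) (hx' : x' ∈ U) : IsEmpty (f ⁻¹' {x'}) :=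
      ⟨fun y => hx.elim (H ⟨y, show f y ∈ U by rw [show f y = x' from y.2]; exact hx'⟩).2⟩
    exact continuousAt_const.congr (eventually_of_mem (hU.mem_nhds hxU) fun x' hx' =>
      have := hempty x' hx'
      tsum_empty.symm)
  · let t := (hf x).toTrivialization
    exact (t.continuousOn_tsum_fiber hg).continuousAt
      (t.open_baseSet.mem_nhds (hf x).mem_toTrivialization_baseSet)

end FiberSum

theorem MeasureTheory.integral_pos_of_mem_support {X : Type*} [TopologicalSpace X]
    [MeasurableSpace X] {μ : Measure X} {h : X → ℝ} (hc : Continuous h) (hint : Integrable h μ)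
    (h0 : 0 ≤ h) {x : X} (hx : x ∈ μ.support) (hpos : 0 < h x) : 0 < ∫ y, h y ∂μ := by
  rw [integral_pos_iff_support_of_nonneg h0 hint]
  exact (Measure.mem_support_iff_forall x).1 hx _ (hc.isOpen_support.mem_nhds hpos.ne')

namespace PaperWG

section

variable {M : Type*} {f : M → M} {φ ψ : M → ℝ}

theorem continuous_transferOp [TopologicalSpace M] [T2Space M] [CompactSpace M]
    (hf : IsLocalHomeomorph f) (hφ : Continuous φ) (hψ : Continuous ψ) :
    Continuous (transferOp f φ ψ) :=
  (isLocalHomeomorph_iff_isCoveringMap.1 hf).continuous_tsum_fiber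
    hf.finite_preimage_singleton ((Real.continuous_exp.comp hφ).mul hψ)

theorem transferOp_nonneg (hψ : 0 ≤ ψ) : 0 ≤ transferOp f φ ψ :=
  fun _ => tsum_nonneg fun y => mul_nonneg (Real.exp_pos _).le (hψ y)

theorem transferOp_pos {x y : M} (hfin : (f ⁻¹' {x}).Finite) (hψ : 0 ≤ ψ) (hy : f y = x)
    (hψy : 0 < ψ y) : 0 < transferOp f φ ψ x :=
  have := hfin.to_subtype
  Summable.tsum_pos .of_finite (fun z => mul_nonneg (Real.exp_pos _).le (hψ z)) ⟨y, hy⟩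
    (mul_pos (Real.exp_pos _) hψy)

theorem continuous_transferOp_iterate [TopologicalSpace M] [T2Space M] [CompactSpace M]
    (hf : IsLocalHomeomorph f) (hφ : Continuous φ) (hψ : Continuous ψ) (n : ℕ) :
    Continuous ((transferOp f φ)^[n] ψ) := by
  induction n with
  | zero => exact hψ
  | succ n ih =>
    rw [Function.iterate_succ_apply']
    exact continuous_transferOp hf hφ ih

theorem transferOp_iterate_nonneg (hψ : 0 ≤ ψ) (n : ℕ) : 0 ≤ (transferOp f φ)^[n] ψ := by
  induction n with
  | zero => exact hψ
  | succ n ih =>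
    rw [Function.iterate_succ_apply']
    exact transferOp_nonneg ih

theorem transferOp_iterate_pos (hfin : ∀ x, (f ⁻¹' {x}).Finite) (hψ : 0 ≤ ψ) {y : M}
    (hψy : 0 < ψ y) (n : ℕ) : 0 < (transferOp f φ)^[n] ψ (f^[n] y) := by
  induction n with
  | zero => exact hψy
  | succ n ih =>
    rw [Function.iterate_succ_apply', Function.iterate_succ_apply']
    exact transferOp_pos (hfin _) (transferOp_iterate_nonneg hψ n) rfl ih

variable [MetricSpace M] [MeasurableSpace M] {ν : Measure M} {lam : ℝ}

theorem IsReferenceMeasure.integral_transferOp_iterate [CompactSpace M]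
    (href : IsReferenceMeasure f φ ν lam) (hf : IsLocalHomeomorph f) (hφ : Continuous φ)
    (hψ : Continuous ψ) (n : ℕ) :
    ∫ x, (transferOp f φ)^[n] ψ x ∂ν = lam ^ n * ∫ x, ψ x ∂ν := by
  induction n with
  | zero => simp
  | succ n ih =>
    rw [Function.iterate_succ_apply', href.2.2 _ (continuous_transferOp_iterate hf hφ hψ n), ih,
      pow_succ', mul_assoc]

theorem IsReferenceMeasure.mem_support_of_iterate_mem_support [CompactSpace M] [BorelSpace M]
    (href : IsReferenceMeasure f φ ν lam) (hf : IsLocalHomeomorph f) (hφ : Continuous φ)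
    {y : M} {n : ℕ} (hy : f^[n] y ∈ ν.support) : y ∈ ν.support := by
  have := href.1
  by_contra hy'
  obtain ⟨U, hU, hU0⟩ := Measure.notMem_support_iff_exists.1 hy'
  obtain ⟨V, hVU, hVo, hyV⟩ := mem_nhds_iff.1 hU
  obtain ⟨ψ, hψ_off, hψ_y, hψ01⟩ := exists_continuous_zero_one_of_isClosed hVo.isClosed_compl
    isClosed_singleton (disjoint_singleton_right.2 (not_not_intro hyV))
  have hψ0 : 0 ≤ (ψ : M → ℝ) := fun z => (hψ01 z).1
  have hψ_null : ∫ z, ψ z ∂ν = 0 := integral_eq_zero_of_ae <| ae_iff.2 <|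
    measure_mono_null (fun z hz => hVU (by_contra fun hzV => hz (hψ_off hzV))) hU0
  have hLψ := continuous_transferOp_iterate hf hφ ψ.continuous n
  have hpos := integral_pos_of_mem_support hLψ
    (hLψ.integrable_of_hasCompactSupport (.of_compactSpace _)) (transferOp_iterate_nonneg hψ0 n)
    hy (transferOp_iterate_pos hf.finite_preimage_singleton hψ0 (by simp [hψ_y rfl]) n)
  rw [href.integral_transferOp_iterate hf hφ ψ.continuous n, hψ_null, mul_zero] at hpos
  exact hpos.false

theorem IsReferenceMeasure.support_eq_univ [CompactSpace M] [BorelSpace M]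
    (href : IsReferenceMeasure f φ ν lam) (hf : IsLocalHomeomorph f) (hdense : DensePreorbits f)
    (hφ : Continuous φ) : ν.support = univ := by
  have := href.1
  obtain ⟨x, hx⟩ := Measure.nonempty_support (IsProbabilityMeasure.ne_zero ν)
  have hpreorbit : (⋃ n, f^[n] ⁻¹' {x}) ⊆ ν.support := iUnion_subset fun n y hy =>
    href.mem_support_of_iterate_mem_support hf hφ (n := n) ((mem_singleton_iff.1 hy).symm ▸ hx)
  simpa [Measure.isClosed_support.closure_eq] using ((hdense x).mono hpreorbit).closure_eq

end

/-- The reference measure has full support: every nonempty open set has positive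
measure. -/
theorem referenceMeasure_fullSupport
    {M : Type*} [MetricSpace M] [CompactSpace M] [MeasurableSpace M] [BorelSpace M]
    (f : M → M) (hf : IsLocalHomeomorph f) (hdense : DensePreorbits f)
    (φ : M → ℝ) (hφ : Continuous φ)
    (ν : Measure M) (lam : ℝ) (href : IsReferenceMeasure f φ ν lam) :
    ∀ U : Set M, IsOpen U → U.Nonempty → 0 < ν U := by
  rintro U hU ⟨x, hx⟩
  have hx_supp : x ∈ ν.support := href.support_eq_univ hf hdense hφ ▸ mem_univ x
  exact (Measure.mem_support_iff_forall x).1 hx_supp U (hU.mem_nhds hx)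

end PaperWG
end
end

section
/- In the attractor setting, assume there exists a continuous map r : N → N with r(x̂) ∈ N_{π(x̂)} for every x̂ ∈ N and r(x̂) = r(ŷ) whenever π(x̂) = π(ŷ). Let φ : N → ℝ be Hölder continuous. Then the series u(x̂) = Σ_{j=0}^{∞} [φ(F^j(x̂)) − φ(F^j(r(x̂)))] converges and defines a continuous function u : N → ℝ, and the potential φ̄ := φ − u + u∘F is continuous and constant on each fiber N_x (i.e. φ̄(ŷ) = φ̄(ẑ) whenever π(ŷ) = π(ẑ)). Moreover, if φ satisfies (H4) and (H5), then so does φ̄. -/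
open MeasureTheory Set Filter Topology
open scoped ENNReal NNReal

noncomputable section

/-!
The series defining `u` converges uniformly because `F^j x̂` and `F^j (r x̂)` lie in a common
fiber, where `F^j` contracts by `λ^j`; Hölder continuity turns this into a geometric bound
`c (λ^s)^j diam(N)^s`. Comparing the series at `ŷ`, `ẑ` and at `F ŷ`, `F ẑ` (which share `r`
when `π ŷ = π ẑ`) shows that `φ - u + u ∘ F` is constant on fibers. Since `u` is bounded,
the Birkhoff sums of `φ` and `φ - u + u ∘ F` differ by at most `2 sup |u|`, which preserves
the Bowen property and every relative pressure.
-/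

namespace PaperWG

section Coboundary

variable {X : Type*} {T : X → X} {φ : X → ℝ}

theorem birkhoff_add_coboundary (u : X → ℝ) (n : ℕ) (x : X) :
    birkhoff T (fun y => φ y - u y + u (T y)) n x = birkhoff T φ n x + (u (T^[n] x) - u x) := by
  have hterm : ∀ j ∈ Finset.range n, φ (T^[j] x) - u (T^[j] x) + u (T (T^[j] x))
      = φ (T^[j] x) + (u (T^[j + 1] x) - u (T^[j] x)) := fun j _ => by
    rw [Function.iterate_succ_apply']
    ring
  rw [birkhoff, Finset.sum_congr rfl hterm, Finset.sum_add_distrib,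
    Finset.sum_range_sub (fun j => u (T^[j] x)), Function.iterate_zero_apply, birkhoff]

theorem abs_birkhoff_add_coboundary_sub_le {u : X → ℝ} {B : ℝ} (hu : ∀ x, |u x| ≤ B)
    (n : ℕ) (x : X) :
    |birkhoff T (fun y => φ y - u y + u (T y)) n x - birkhoff T φ n x| ≤ 2 * B := by
  rw [birkhoff_add_coboundary, add_sub_cancel_left]
  linarith [abs_sub (u (T^[n] x)) (u x), hu (T^[n] x), hu x]

end Coboundary

section BoundedBirkhoffDifference

variable {X : Type*} [MetricSpace X] {T : X → X} {φ ψ : X → ℝ} {K : ℝ}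

theorem sSup_image_le_sSup_image_add {α : Type*} {s : Set α} {g g' : α → ℝ} (hK : 0 ≤ K)
    (h : ∀ y ∈ s, |g y - g' y| ≤ K) : sSup (g '' s) ≤ sSup (g' '' s) + K := by
  rcases s.eq_empty_or_nonempty with rfl | hne
  · simpa using hK
  by_cases hbdd : BddAbove (g' '' s)
  · refine csSup_le (hne.image g) ?_
    rintro _ ⟨y, hy, rfl⟩
    linarith [(abs_le.mp (h y hy)).2, le_csSup hbdd (mem_image_of_mem g' hy)]
  · have hbdd' : ¬BddAbove (g '' s) := by
      rintro ⟨b, hb⟩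
      refine hbdd ⟨b + K, ?_⟩
      rintro _ ⟨y, hy, rfl⟩
      linarith [(abs_le.mp (h y hy)).1, hb (mem_image_of_mem g hy)]
    rw [Real.sSup_of_not_bddAbove hbdd, Real.sSup_of_not_bddAbove hbdd']
    linarith

theorem mPre_le_exp_mul (hK : 0 ≤ K) (h : ∀ n x, |birkhoff T ψ n x - birkhoff T φ n x| ≤ K)
    (Λ : Set X) (ε : ℝ) (n : ℕ) (γ : ℝ) :
    mPre T ψ Λ ε n γ ≤ ENNReal.ofReal (Real.exp K) * mPre T φ Λ ε n γ := by
  have hc0 : ENNReal.ofReal (Real.exp K) ≠ 0 := by simpa using Real.exp_pos K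
  simp only [mPre, ENNReal.mul_iInf_of_ne hc0 ENNReal.ofReal_ne_top, ← ENNReal.tsum_mul_left]
  refine iInf₂_mono fun U _ => iInf₂_mono fun _ _ => ENNReal.tsum_le_tsum fun p => ?_
  rw [← ENNReal.ofReal_mul (Real.exp_nonneg K), ← Real.exp_add]
  refine ENNReal.ofReal_le_ofReal (Real.exp_le_exp.mpr ?_)
  have := sSup_image_le_sSup_image_add hK (s := dynBall T p.1.1 p.1.2 ε)
    fun y _ => h p.1.2 y
  rw [rSup, rSup]
  linarith

theorem mRel_le_exp_mul (hK : 0 ≤ K) (h : ∀ n x, |birkhoff T ψ n x - birkhoff T φ n x| ≤ K)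
    (Λ : Set X) (ε γ : ℝ) :
    mRel T ψ Λ ε γ ≤ ENNReal.ofReal (Real.exp K) * mRel T φ Λ ε γ := by
  rw [mRel, mRel, ENNReal.mul_iSup]
  exact iSup_mono fun n => mPre_le_exp_mul hK h Λ ε n γ

theorem presRel_eq_of_abs_birkhoff_sub_le
    (h : ∀ n x, |birkhoff T ψ n x - birkhoff T φ n x| ≤ K) (Λ : Set X) :
    presRel T ψ Λ = presRel T φ Λ := by
  have h₁ : ∀ n x, |birkhoff T ψ n x - birkhoff T φ n x| ≤ |K| :=
    fun n x => (h n x).trans (le_abs_self K)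
  have h₂ : ∀ n x, |birkhoff T φ n x - birkhoff T ψ n x| ≤ |K| :=
    fun n x => abs_sub_comm (birkhoff T φ n x) _ ▸ h₁ n x
  have hzero : ∀ ε γ, mRel T ψ Λ ε γ = 0 ↔ mRel T φ Λ ε γ = 0 := fun ε γ =>
    ⟨fun hψ => le_antisymm ((mRel_le_exp_mul (abs_nonneg K) h₂ Λ ε γ).trans (by simp [hψ]))
        bot_le,
      fun hφ => le_antisymm ((mRel_le_exp_mul (abs_nonneg K) h₁ Λ ε γ).trans (by simp [hφ]))
        bot_le⟩
  simp only [presRel, presRelEps, hzero]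

theorem PressureLocatedOn.of_abs_birkhoff_sub_le {S : Set X} (hφ : PressureLocatedOn T φ S)
    (h : ∀ n x, |birkhoff T ψ n x - birkhoff T φ n x| ≤ K) : PressureLocatedOn T ψ S := by
  simpa only [PressureLocatedOn, pres, presRel_eq_of_abs_birkhoff_sub_le h] using hφ

theorem BowenOn.of_abs_birkhoff_sub_le {S : Set X} (hφ : BowenOn T φ S)
    (h : ∀ n x, |birkhoff T ψ n x - birkhoff T φ n x| ≤ K) : BowenOn T ψ S := by
  obtain ⟨ε, hε, V, hV, hbound⟩ := hφ
  have sum_eq (χ : X → ℝ) (n : ℕ) (y z : X) :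
      ∑ j ∈ Finset.range (n + 1), (χ (T^[j] y) - χ (T^[j] z))
        = birkhoff T χ (n + 1) y - birkhoff T χ (n + 1) z :=
    Finset.sum_sub_distrib _ _
  refine ⟨ε, hε, V + 2 * |K|, by positivity, fun x hx n y hy z hz => ?_⟩
  have hVφ := abs_le.mp (sum_eq φ n y z ▸ hbound x hx n y hy z hz)
  have hy' := abs_le.mp (h (n + 1) y)
  have hz' := abs_le.mp (h (n + 1) z)
  rw [sum_eq, abs_le]
  constructor <;> linarith [le_abs_self K]

end BoundedBirkhoffDifference

structure IsFiberContraction {M N : Type*} [MetricSpace N] (π : N → M) (F : N → N)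
    (f : M → M) (lam : ℝ) : Prop where
  semiconj : Function.Semiconj π F f
  nonneg : 0 ≤ lam
  lt_one : lam < 1
  dist_le : ∀ y z, π y = π z → dist (F y) (F z) ≤ lam * dist y z

def fiberTransfer {N : Type*} (F r : N → N) (φ : N → ℝ) (x : N) : ℝ :=
  ∑' j : ℕ, (φ (F^[j] x) - φ (F^[j] (r x)))

section FiberTransfer

variable {M N : Type*} [MetricSpace N] {π : N → M} {F : N → N} {f : M → M} {lam : ℝ}
  {φ : N → ℝ} {r : N → N} {c s : ℝ≥0}

namespace IsFiberContraction

theorem dist_iterate_le (hF : IsFiberContraction π F f lam) {y z : N} (h : π y = π z)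
    (j : ℕ) : dist (F^[j] y) (F^[j] z) ≤ lam ^ j * dist y z := by
  induction j with
  | zero => simp
  | succ j ih =>
    have hfib : π (F^[j] y) = π (F^[j] z) := by
      rw [(hF.semiconj.iterate_right j).eq, (hF.semiconj.iterate_right j).eq, h]
    rw [Function.iterate_succ_apply', Function.iterate_succ_apply', pow_succ', mul_assoc]
    exact (hF.dist_le _ _ hfib).trans (mul_le_mul_of_nonneg_left ih hF.nonneg)

theorem abs_sub_iterate_le [BoundedSpace N] (hF : IsFiberContraction π F f lam)
    (hφ : HolderWith c s φ) {y z : N} (h : π y = π z) (j : ℕ) :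
    |φ (F^[j] y) - φ (F^[j] z)|
      ≤ c * Metric.diam (univ : Set N) ^ (s : ℝ) * (lam ^ (s : ℝ)) ^ j := by
  have hdist : dist (F^[j] y) (F^[j] z) ≤ lam ^ j * Metric.diam (univ : Set N) :=
    (hF.dist_iterate_le h j).trans <| mul_le_mul_of_nonneg_left
      (Metric.dist_le_diam_of_mem (Bornology.isBounded_univ.mpr ‹_›) (mem_univ y) (mem_univ z))
      (pow_nonneg hF.nonneg j)
  calc |φ (F^[j] y) - φ (F^[j] z)| ≤ c * dist (F^[j] y) (F^[j] z) ^ (s : ℝ) := hφ.dist_le _ _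
    _ ≤ c * (lam ^ j * Metric.diam (univ : Set N)) ^ (s : ℝ) := by gcongr
    _ = c * Metric.diam (univ : Set N) ^ (s : ℝ) * (lam ^ (s : ℝ)) ^ j := by
      rw [Real.mul_rpow (pow_nonneg hF.nonneg j) Metric.diam_nonneg,
        Real.rpow_pow_comm hF.nonneg]
      ring

theorem summable_geometric_rpow (hF : IsFiberContraction π F f lam) (hs : 0 < s) (A : ℝ) :
    Summable fun j : ℕ => A * (lam ^ (s : ℝ)) ^ j :=
  (summable_geometric_of_lt_one (Real.rpow_nonneg hF.nonneg _)
    (Real.rpow_lt_one hF.nonneg hF.lt_one (by exact_mod_cast hs))).mul_left A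

theorem hasSum_fiberTransfer [BoundedSpace N] (hF : IsFiberContraction π F f lam)
    (hφ : HolderWith c s φ) (hs : 0 < s) (hr : ∀ x, π (r x) = π x) (x : N) :
    HasSum (fun j => φ (F^[j] x) - φ (F^[j] (r x))) (fiberTransfer F r φ x) :=
  (Summable.of_norm_bounded (hF.summable_geometric_rpow hs _)
    fun j => hF.abs_sub_iterate_le hφ (hr x).symm j).hasSum

theorem continuous_fiberTransfer [BoundedSpace N] (hF : IsFiberContraction π F f lam)
    (hFc : Continuous F) (hφ : HolderWith c s φ) (hs : 0 < s) (hr : ∀ x, π (r x) = π x)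
    (hrc : Continuous r) : Continuous (fiberTransfer F r φ) :=
  continuous_tsum
    (fun j => ((hφ.continuous hs).comp (hFc.iterate j)).sub
      ((hφ.continuous hs).comp ((hFc.iterate j).comp hrc)))
    (hF.summable_geometric_rpow hs _) fun j x => hF.abs_sub_iterate_le hφ (hr x).symm j

theorem exists_abs_fiberTransfer_le [BoundedSpace N] (hF : IsFiberContraction π F f lam)
    (hφ : HolderWith c s φ) (hs : 0 < s) (hr : ∀ x, π (r x) = π x) :
    ∃ B, ∀ x, |fiberTransfer F r φ x| ≤ B := by
  set A := (c : ℝ) * Metric.diam (univ : Set N) ^ (s : ℝ)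
  refine ⟨∑' j : ℕ, A * (lam ^ (s : ℝ)) ^ j, fun x => ?_⟩
  exact tsum_of_norm_bounded (f := fun j => φ (F^[j] x) - φ (F^[j] (r x)))
    (hF.summable_geometric_rpow hs A).hasSum fun j => hF.abs_sub_iterate_le hφ (hr x).symm j

end IsFiberContraction

end FiberTransfer

/-- Both differences `u ŷ - u ẑ` and `u (F ŷ) - u (F ẑ)` are tails of the series
`∑_j (φ(F^j ŷ) − φ(F^j ẑ))`, the second one missing its first term. -/
theorem coboundary_eq_of_hasSum {M N : Type*} {π : N → M} {F : N → N} {f : M → M}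
    {φ : N → ℝ} {r : N → N} {u : N → ℝ}
    (hu : ∀ x, HasSum (fun j => φ (F^[j] x) - φ (F^[j] (r x))) (u x))
    (hsemi : Function.Semiconj π F f) (hr : ∀ x y, π x = π y → r x = r y)
    {y z : N} (h : π y = π z) : φ y - u y + u (F y) = φ z - u z + u (F z) := by
  have hdiff (y z : N) (h : π y = π z) :
      HasSum (fun j => φ (F^[j] y) - φ (F^[j] z)) (u y - u z) := by
    have hterm : (fun j => φ (F^[j] y) - φ (F^[j] z))
        = fun j => (φ (F^[j] y) - φ (F^[j] (r y))) - (φ (F^[j] z) - φ (F^[j] (r z))) := by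
      funext j
      rw [hr y z h]
      ring
    exact hterm ▸ (hu y).sub (hu z)
  have hshift := (hasSum_nat_add_iff' 1).mpr (hdiff y z h)
  have hFdiff := hdiff (F y) (F z) (by rw [hsemi.eq, hsemi.eq, h])
  simp only [Function.iterate_succ_apply, Finset.range_one, Finset.sum_singleton,
    Function.iterate_zero_apply] at hshift
  linarith [hFdiff.unique hshift]

theorem holder_cohomologous_to_fiber_constant_general
    {M : Type*} {N : Type*} [MetricSpace N] [CompactSpace N]
    (f : M → M) (G : Set M) (F : N → N) (hFemb : IsEmbedding F) (π : N → M)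
    (hsemi : ∀ z : N, π (F z) = f (π z))
    (lam : ℝ) (hlam0 : 0 < lam) (hlam1 : lam < 1)
    (hcontr : ∀ yh zh : N, π yh = π zh → dist (F yh) (F zh) ≤ lam * dist yh zh)
    (r : N → N) (hrc : Continuous r) (hrfib : ∀ xh : N, π (r xh) = π xh)
    (hrconst : ∀ xh yh : N, π xh = π yh → r xh = r yh)
    (φ : N → ℝ) (hφHolder : ∃ c s : NNReal, 0 < s ∧ HolderWith c s φ) :
    ∃ u : N → ℝ,
      (∀ xh : N, HasSum (fun j : ℕ => φ (F^[j] xh) - φ (F^[j] (r xh))) (u xh)) ∧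
      Continuous u ∧
      (∀ yh zh : N, π yh = π zh →
        φ yh - u yh + u (F yh) = φ zh - u zh + u (F zh)) ∧
      ((BowenOn F φ (π ⁻¹' G) ∧ PressureLocatedOn F φ (π ⁻¹' G)) →
        (BowenOn F (fun xh => φ xh - u xh + u (F xh)) (π ⁻¹' G) ∧
          PressureLocatedOn F (fun xh => φ xh - u xh + u (F xh)) (π ⁻¹' G))) := by
  obtain ⟨c, s, hs, hφ⟩ := hφHolder
  have hF : IsFiberContraction π F f lam := ⟨hsemi, hlam0.le, hlam1, hcontr⟩
  have hu := hF.hasSum_fiberTransfer hφ hs hrfib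
  obtain ⟨B, huB⟩ := hF.exists_abs_fiberTransfer_le hφ hs hrfib
  have hclose := abs_birkhoff_add_coboundary_sub_le (T := F) (φ := φ) huB
  refine ⟨fiberTransfer F r φ, hu, hF.continuous_fiberTransfer hFemb.continuous hφ hs hrfib hrc,
    fun _ _ h => coboundary_eq_of_hasSum hu hsemi hrconst h, ?_⟩
  rintro ⟨hBowen, hPressure⟩
  exact ⟨hBowen.of_abs_birkhoff_sub_le hclose, hPressure.of_abs_birkhoff_sub_le hclose⟩

/-- Proposition: any Hölder potential on the attractor is cohomologous, via the
converging series `u(x̂) = ∑_j (φ(F^j x̂) − φ(F^j r(x̂)))`, to a continuous potential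
which is constant on fibers; moreover (H4) and (H5) are preserved. -/
theorem holder_cohomologous_to_fiber_constant
    {M : Type*} [MetricSpace M] [CompactSpace M]
    {N : Type*} [MetricSpace N] [CompactSpace N]
    (f : M → M) (hf : IsLocalHomeomorph f) (hdense : DensePreorbits f)
    (δ₀ : ℝ) (hδ₀ : 0 < δ₀) (θ : ℝ) (hθ : 0 < θ)
    (G : Set M) (hG : G = gibbsSet f δ₀ θ)
    (F : N → N) (hFemb : IsEmbedding F)
    (π : N → M) (hπc : Continuous π) (hπs : Function.Surjective π)
    (hsemi : ∀ z : N, π (F z) = f (π z))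
    (lam : ℝ) (hlam0 : 0 < lam) (hlam1 : lam < 1)
    (hcontr : ∀ yh zh : N, π yh = π zh → dist (F yh) (F zh) ≤ lam * dist yh zh)
    (H : M → M → N → N) (C : ℝ) (hC : 1 ≤ C)
    (hHfib : ∀ (x y : M) (zh : N), π zh = x → π (H x y zh) = y)
    (hHdist : ∀ (x y : M) (xh yh : N), π xh = x → π yh = y →
      C⁻¹ * (dist x y + dist (H x y xh) yh) ≤ dist xh yh ∧
      dist xh yh ≤ C * (dist x y + dist (H x y xh) yh))
    (hHequi : ∀ (x y : M) (zh : N), π zh = x → F (H x y zh) = H (f x) (f y) (F zh))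
    (r : N → N) (hrc : Continuous r) (hrfib : ∀ xh : N, π (r xh) = π xh)
    (hrconst : ∀ xh yh : N, π xh = π yh → r xh = r yh)
    (φ : N → ℝ) (hφHolder : ∃ c s : NNReal, 0 < s ∧ HolderWith c s φ) :
    ∃ u : N → ℝ,
      (∀ xh : N, HasSum (fun j : ℕ => φ (F^[j] xh) - φ (F^[j] (r xh))) (u xh)) ∧
      Continuous u ∧
      (∀ yh zh : N, π yh = π zh →
        φ yh - u yh + u (F yh) = φ zh - u zh + u (F zh)) ∧
      ((BowenOn F φ (π ⁻¹' G) ∧ PressureLocatedOn F φ (π ⁻¹' G)) →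
        (BowenOn F (fun xh => φ xh - u xh + u (F xh)) (π ⁻¹' G) ∧
          PressureLocatedOn F (fun xh => φ xh - u xh + u (F xh)) (π ⁻¹' G))) :=
  holder_cohomologous_to_fiber_constant_general f G F hFemb π hsemi lam hlam0 hlam1 hcontr r hrc
    hrfib hrconst φ hφHolder

end PaperWG
end
end

section
/- Let N and M be compact metric spaces, F : N → N and f : M → M continuous, and π : N → M a continuous surjection with π∘F = f∘π. Suppose F uniformly contracts fibers: there is 0 < λ < 1 such that d_N(F(ŷ), F(ẑ)) ≤ λ d_N(ŷ, ẑ) whenever π(ŷ) = π(ẑ). If μ̂₁ and μ̂₂ are ergodic F-invariant Borel probability measures on N with π_*μ̂₁ = π_*μ̂₂ and this common projection is an ergodic f-invariant measure, then μ̂₁ = μ̂₂. -/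
open MeasureTheory Set Filter Topology
open scoped ENNReal NNReal

noncomputable section

/-!
Since `F` contracts fibers uniformly and maps fibers into fibers, `F^[n]` squeezes every fiber
to diameter `≤ lam ^ n * diam N`. Hence for continuous `φ` the function `φ ∘ F^[n]` has
oscillation `≤ ε` on each fiber, so it lies within `ε` below its fiberwise supremum, a function
pulled back from `M`. The integral of a pulled-back function only depends on the common projection
`π_* μ₁ = π_* μ₂`, and invariance gives `∫ φ dμᵢ = ∫ φ ∘ F^[n] dμᵢ`; thus the integrals of `φ`
against `μ₁` and `μ₂` differ by at most `ε`.
-/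

namespace PaperWG

open Function

section FiberSup

variable {N M : Type*} {π : N → M} {g : N → ℝ}

def fiberSup (π : N → M) (g : N → ℝ) (x : M) : ℝ :=
  sSup (g '' (π ⁻¹' {x}))

lemma fiberSup_le (y : N) {c : ℝ} (h : ∀ z, π z = π y → g z ≤ c) : fiberSup π g (π y) ≤ c :=
  csSup_le ⟨g y, y, rfl, rfl⟩ (by rintro _ ⟨z, hz, rfl⟩; exact h z hz)

variable [TopologicalSpace N] [CompactSpace N] [TopologicalSpace M] [T2Space M]

lemma isCompact_image_fiber (hπ : Continuous π) (hg : Continuous g) (x : M) :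
    IsCompact (g '' (π ⁻¹' {x})) :=
  (isClosed_singleton.preimage hπ).isCompact.image hg

lemma le_fiberSup (hπ : Continuous π) (hg : Continuous g) (y : N) : g y ≤ fiberSup π g (π y) :=
  le_csSup (isCompact_image_fiber hπ hg _).bddAbove ⟨y, rfl, rfl⟩

lemma le_fiberSup_iff (hπ : Continuous π) (hg : Continuous g) (y : N) {c : ℝ} :
    c ≤ fiberSup π g (π y) ↔ ∃ z, π z = π y ∧ c ≤ g z := by
  refine ⟨fun hc => ?_, fun ⟨z, hz, hcz⟩ => hz ▸ hcz.trans (le_fiberSup hπ hg z)⟩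
  obtain ⟨z, hz, hmax⟩ := (isCompact_image_fiber hπ hg (π y)).sSup_mem ⟨g y, y, rfl, rfl⟩
  exact ⟨z, hz, hmax ▸ hc⟩

lemma measurable_fiberSup [MeasurableSpace M] [BorelSpace M] (hπ : Continuous π)
    (hπs : Surjective π) (hg : Continuous g) : Measurable (fiberSup π g) := by
  refine measurable_of_Ici fun c => ?_
  have hpre : fiberSup π g ⁻¹' Ici c = π '' {z | c ≤ g z} := by
    ext x
    obtain ⟨y, rfl⟩ := hπs x
    simp only [mem_preimage, mem_Ici, mem_image, mem_ofPred_eq, le_fiberSup_iff hπ hg]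
    exact exists_congr fun z => and_comm
  rw [hpre]
  exact ((isClosed_le continuous_const hg).isCompact.image hπ).isClosed.measurableSet

theorem abs_integral_sub_le_of_dist_le_on_fibers [MeasurableSpace N] [OpensMeasurableSpace N]
    [MeasurableSpace M] [BorelSpace M] (hπ : Continuous π) (hπs : Surjective π)
    (hg : Continuous g) {ε : ℝ} (hosc : ∀ y z, π y = π z → dist (g y) (g z) ≤ ε)
    (μ₁ μ₂ : Measure N) [IsProbabilityMeasure μ₁] [IsProbabilityMeasure μ₂]
    (hmap : μ₁.map π = μ₂.map π) :
    |∫ y, g y ∂μ₁ - ∫ y, g y ∂μ₂| ≤ ε := by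
  set u := fiberSup π g
  have hsandwich : ∀ (μ : Measure N) [IsProbabilityMeasure μ],
      ∫ y, g y ∂μ ≤ ∫ x, u x ∂(μ.map π) ∧ ∫ x, u x ∂(μ.map π) ≤ ∫ y, g y ∂μ + ε := by
    intro μ _
    have hg_int : Integrable g μ := hg.integrable_of_hasCompactSupport (.of_compactSpace g)
    have hgε_int : Integrable (fun y => g y + ε) μ := hg_int.add (integrable_const ε)
    have hlow : ∀ y, g y ≤ u (π y) := le_fiberSup hπ hg
    have hup : ∀ y, u (π y) ≤ g y + ε := fun y =>
      fiberSup_le y fun z hz => by linarith [(abs_sub_le_iff.mp (hosc y z hz.symm)).2]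
    have hu_meas := measurable_fiberSup hπ hπs hg
    have hu_int : Integrable (fun y => u (π y)) μ :=
      integrable_of_le_of_le (hu_meas.comp hπ.measurable).aestronglyMeasurable
        (ae_of_all _ hlow) (ae_of_all _ hup) hg_int hgε_int
    rw [integral_map hπ.aemeasurable hu_meas.aestronglyMeasurable]
    refine ⟨integral_mono hg_int hu_int hlow, ?_⟩
    calc ∫ y, u (π y) ∂μ ≤ ∫ y, g y + ε ∂μ := integral_mono hu_int hgε_int hup
      _ = ∫ y, g y ∂μ + ε := by simp [integral_add hg_int (integrable_const ε)]
  obtain ⟨h₁, h₁'⟩ := hsandwich μ₁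
  obtain ⟨h₂, h₂'⟩ := hsandwich μ₂
  rw [hmap] at h₁ h₁'
  rw [abs_sub_le_iff]
  constructor <;> linarith

end FiberSup

section FiberContraction

variable {N M : Type*} [PseudoMetricSpace N] {F : N → N} {f : M → M} {π : N → M} {lam : ℝ}

lemma dist_iterate_le_of_fiber (hsemi : Semiconj π F f) (hlam : 0 ≤ lam)
    (hcontr : ∀ y z, π y = π z → dist (F y) (F z) ≤ lam * dist y z) (n : ℕ) {y z : N}
    (h : π y = π z) : dist (F^[n] y) (F^[n] z) ≤ lam ^ n * dist y z := by
  induction n with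
  | zero => simp
  | succ n ih =>
    have hfib : π (F^[n] y) = π (F^[n] z) := by
      rw [(hsemi.iterate_right n).eq, (hsemi.iterate_right n).eq, h]
    rw [iterate_succ_apply', iterate_succ_apply', pow_succ', mul_assoc]
    exact (hcontr _ _ hfib).trans (mul_le_mul_of_nonneg_left ih hlam)

lemma exists_iterate_dist_lt_on_fibers [CompactSpace N] (hsemi : Semiconj π F f)
    (hlam0 : 0 ≤ lam) (hlam1 : lam < 1)
    (hcontr : ∀ y z, π y = π z → dist (F y) (F z) ≤ lam * dist y z) {δ : ℝ} (hδ : 0 < δ) :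
    ∃ n, ∀ y z, π y = π z → dist (F^[n] y) (F^[n] z) < δ := by
  set D := Metric.diam (univ : Set N)
  have htend : Tendsto (fun n : ℕ => lam ^ n * D) atTop (𝓝 0) := by
    simpa using (tendsto_pow_atTop_nhds_zero_of_lt_one hlam0 hlam1).mul_const D
  obtain ⟨n, hn⟩ := (htend.eventually (gt_mem_nhds hδ)).exists
  refine ⟨n, fun y z h => (dist_iterate_le_of_fiber hsemi hlam0 hcontr n h).trans_lt ?_⟩
  have hyz : dist y z ≤ D :=
    Metric.dist_le_diam_of_mem isCompact_univ.isBounded (mem_univ y) (mem_univ z)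
  exact (mul_le_mul_of_nonneg_left hyz (pow_nonneg hlam0 n)).trans_lt hn

end FiberContraction

theorem ergodic_lift_unique_general
    {N : Type*} [MetricSpace N] [CompactSpace N] [MeasurableSpace N] [BorelSpace N]
    {M : Type*} [MetricSpace M] [MeasurableSpace M] [BorelSpace M]
    (F : N → N) (f : M → M) (hF : Continuous F)
    (π : N → M) (hπc : Continuous π) (hπs : Function.Surjective π)
    (hsemi : ∀ z : N, π (F z) = f (π z))
    (lam : ℝ) (hlam0 : 0 < lam) (hlam1 : lam < 1)
    (hcontr : ∀ yh zh : N, π yh = π zh → dist (F yh) (F zh) ≤ lam * dist yh zh)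
    (μ₁ μ₂ : Measure N)
    (hp1 : IsProbabilityMeasure μ₁) (hp2 : IsProbabilityMeasure μ₂)
    (he1 : Ergodic F μ₁) (he2 : Ergodic F μ₂)
    (hproj : Measure.map π μ₁ = Measure.map π μ₂) :
    μ₁ = μ₂ := by
  refine ext_of_forall_integral_eq_of_IsFiniteMeasure fun φ => eq_of_forall_dist_le fun ε hε => ?_
  obtain ⟨δ, hδ, hφδ⟩ := Metric.uniformContinuous_iff.mp
    (CompactSpace.uniformContinuous_of_continuous φ.continuous) ε hε
  obtain ⟨n, hn⟩ := exists_iterate_dist_lt_on_fibers hsemi hlam0.le hlam1 hcontr hδ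
  have hinv : ∀ μ : Measure N, MeasurePreserving F μ μ →
      ∫ y, φ (F^[n] y) ∂μ = ∫ y, φ y ∂μ := fun μ hμ => by
    rw [← integral_map (hF.iterate n).aemeasurable φ.continuous.aestronglyMeasurable,
      (hμ.iterate n).map_eq]
  rw [Real.dist_eq, ← hinv μ₁ he1.toMeasurePreserving, ← hinv μ₂ he2.toMeasurePreserving]
  exact abs_integral_sub_le_of_dist_le_on_fibers hπc hπs (φ.continuous.comp (hF.iterate n))
    (fun y z h => (hφδ (hn y z h)).le) μ₁ μ₂ hproj

/-- Lemma: two ergodic invariant measures of a fiber-contracting skew system with the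
same ergodic projection coincide. -/
theorem ergodic_lift_unique
    {N : Type*} [MetricSpace N] [CompactSpace N] [MeasurableSpace N] [BorelSpace N]
    {M : Type*} [MetricSpace M] [CompactSpace M] [MeasurableSpace M] [BorelSpace M]
    (F : N → N) (f : M → M) (hF : Continuous F) (hf : Continuous f)
    (π : N → M) (hπc : Continuous π) (hπs : Function.Surjective π)
    (hsemi : ∀ z : N, π (F z) = f (π z))
    (lam : ℝ) (hlam0 : 0 < lam) (hlam1 : lam < 1)
    (hcontr : ∀ yh zh : N, π yh = π zh → dist (F yh) (F zh) ≤ lam * dist yh zh)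
    (μ₁ μ₂ : Measure N)
    (hp1 : IsProbabilityMeasure μ₁) (hp2 : IsProbabilityMeasure μ₂)
    (he1 : Ergodic F μ₁) (he2 : Ergodic F μ₂)
    (hproj : Measure.map π μ₁ = Measure.map π μ₂)
    (hergbase : Ergodic f (Measure.map π μ₁)) :
    μ₁ = μ₂ :=
  ergodic_lift_unique_general F f hF π hπc hπs hsemi lam hlam0 hlam1 hcontr μ₁ μ₂ hp1 hp2 he1 he2
    hproj

end PaperWG
end
end

section
/- Let N and M be compact metric spaces, F : N → N and f : M → M continuous, and π : N → M a continuous surjection with π∘F = f∘π. Suppose F uniformly contracts fibers: there is 0 < λ < 1 such that d_N(F(ŷ), F(ẑ)) ≤ λ d_N(ŷ, ẑ) whenever π(ŷ) = π(ẑ). Then for every x ∈ M, the topological entropy of F on the fiber π^{-1}(x) is zero: h_top(F, π^{-1}(x)) = 0. -/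
open MeasureTheory Set Filter Topology
open scoped ENNReal NNReal

noncomputable section

namespace PaperWG

section Bowen

variable {N : Type*} [MetricSpace N]

/-- `E` is an `(n,ε)`-spanning set for `Y`. -/
def IsSpanning (F : N → N) (Y : Set N) (n : ℕ) (ε : ℝ) (E : Finset N) : Prop :=
  ∀ y ∈ Y, ∃ z ∈ E, ∀ j < n, dist (F^[j] y) (F^[j] z) < ε

/-- `r_n(Y,ε)`: minimal cardinality of an `(n,ε)`-spanning set for `Y`. -/
noncomputable def spanCard (F : N → N) (Y : Set N) (n : ℕ) (ε : ℝ) : ℕ :=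
  sInf {k : ℕ | ∃ E : Finset N, E.card = k ∧ IsSpanning F Y n ε E}

/-- Bowen topological entropy of `F` on the subset `Y`:
`h_top(F,Y) = lim_{ε→0} limsup_n (1/n) log r_n(Y,ε)`; the inner quantity is
nonincreasing in `ε`, so the limit is the supremum over `ε > 0`. -/
noncomputable def bowenEntropy (F : N → N) (Y : Set N) : ℝ :=
  ⨆ ε : {e : ℝ // 0 < e},
    Filter.atTop.limsup fun n : ℕ => Real.log (spanCard F Y n ε.1) / n

end Bowen

/-- The topological entropy of `F` on each fiber `π⁻¹(x)` vanishes, since `F`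
uniformly contracts fibers. -/
theorem bowenEntropy_fiber_eq_zero
    {N : Type*} [MetricSpace N] [CompactSpace N]
    {M : Type*} [MetricSpace M] [CompactSpace M]
    (F : N → N) (f : M → M) (hF : Continuous F) (hf : Continuous f)
    (π : N → M) (hπc : Continuous π) (hπs : Function.Surjective π)
    (hsemi : ∀ z : N, π (F z) = f (π z))
    (lam : ℝ) (hlam0 : 0 < lam) (hlam1 : lam < 1)
    (hcontr : ∀ yh zh : N, π yh = π zh → dist (F yh) (F zh) ≤ lam * dist yh zh) :
    ∀ x : M, bowenEntropy F (π ⁻¹' {x}) = 0 := by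
  intro x
  set Y : Set N := π ⁻¹' {x} with hY
  have hYc : IsCompact Y := (isClosed_singleton.preimage hπc).isCompact
  have hsemiIt : ∀ (j : ℕ) (w : N), π (F^[j] w) = f^[j] (π w) := by
    intro j
    induction j with
    | zero => intro w; simp
    | succ j ih =>
      intro w
      rw [Function.iterate_succ_apply', Function.iterate_succ_apply', hsemi, ih w]
  have hlim : ∀ ε : {e : ℝ // 0 < e},
      Filter.atTop.limsup (fun n : ℕ => Real.log (spanCard F Y n ε.1) / n) = 0 := by
    rintro ⟨ε, hε⟩
    obtain ⟨t, htY, htcov⟩ := hYc.elim_nhds_subcover (fun z => Metric.ball z ε)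
      (fun z _ => Metric.ball_mem_nhds z hε)
    set C : ℕ := t.card + 1 with hC
    have hspan : ∀ n : ℕ, spanCard F Y n ε ≤ C := by
      intro n
      have hmem : t.card ∈ {k : ℕ | ∃ E : Finset N, E.card = k ∧ IsSpanning F Y n ε E} := by
        refine ⟨t, rfl, ?_⟩
        intro y hy
        have := htcov hy
        simp only [Set.mem_iUnion] at this
        obtain ⟨z, hz, hball⟩ := this
        refine ⟨z, hz, ?_⟩
        have hdyz : dist y z < ε := Metric.mem_ball.mp hball
        have hzY : z ∈ Y := htY z hz
        have hfib : π y = π z := by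
          simp only [hY, Set.mem_preimage, Set.mem_singleton_iff] at hy hzY
          rw [hy, hzY]
        have hiter : ∀ j : ℕ, dist (F^[j] y) (F^[j] z) ≤ dist y z := by
          intro j
          induction j with
          | zero => simp
          | succ j ih =>
            rw [Function.iterate_succ_apply', Function.iterate_succ_apply']
            have hfibj : π (F^[j] y) = π (F^[j] z) := by
              rw [hsemiIt, hsemiIt, hfib]
            calc dist (F (F^[j] y)) (F (F^[j] z))
                ≤ lam * dist (F^[j] y) (F^[j] z) := hcontr _ _ hfibj
              _ ≤ 1 * dist (F^[j] y) (F^[j] z) := by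
                  exact mul_le_mul_of_nonneg_right hlam1.le dist_nonneg
              _ = dist (F^[j] y) (F^[j] z) := one_mul _
              _ ≤ dist y z := ih
        intro j _
        exact lt_of_le_of_lt (hiter j) hdyz
      calc spanCard F Y n ε ≤ t.card := Nat.sInf_le hmem
        _ ≤ C := Nat.le_succ _
    have htend : Filter.Tendsto (fun n : ℕ => Real.log (spanCard F Y n ε) / n)
        Filter.atTop (nhds 0) := by
      apply squeeze_zero (fun n => ?_) (fun n => ?_)
        (tendsto_const_div_atTop_nhds_zero_nat (Real.log C))
      · apply div_nonneg _ (Nat.cast_nonneg n)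
        rcases Nat.eq_zero_or_pos (spanCard F Y n ε) with h | h
        · simp [h]
        · exact Real.log_nonneg (by exact_mod_cast h)
      · have hlog : Real.log (spanCard F Y n ε) ≤ Real.log C := by
          rcases Nat.eq_zero_or_pos (spanCard F Y n ε) with h | h
          · simp only [h, Nat.cast_zero, Real.log_zero]
            exact Real.log_nonneg (by exact_mod_cast Nat.one_le_iff_ne_zero.mpr (by simp [hC]))
          · exact Real.log_le_log (by exact_mod_cast h) (by exact_mod_cast hspan n)
        rcases Nat.eq_zero_or_pos n with h | h
        · simp [h]
        · exact div_le_div_of_nonneg_right hlog (Nat.cast_nonneg n) |>.trans_eq rfl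
    exact htend.limsup_eq
  have : Nonempty {e : ℝ // 0 < e} := ⟨⟨1, one_pos⟩⟩
  rw [bowenEntropy]
  simp only [hlim]
  exact ciSup_const

end PaperWG
end
end
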